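/- arXiv:1404.2761 — 5 statements merged into one kernel-verified Lean document; each statement's English description precedes it below -/
import Mathlib

section
/- With U_a, U_b as above and ψ(w) defined by the two-pass product starting from e₁, if w ∈ {a,b}^n is not a palindrome, then ψ(w) ≠ e₁, and moreover the squared norm of the projection of ψ(w) onto the span of e₂ and e₃ is at least 25^{-n}. -/
open Matrix

/-- The letter matrices of the Ambainis–Watrous algorithm: `U false = U_a`, `U true = U_b`. -/
noncomputable def AWU : Bool → Matrix (Fin 3) (Fin 3) ℚ
  | false => (1/5 : ℚ) • !![4, 3, 0; -3, 4, 0; 0, 0, 5]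
  | true  => (1/5 : ℚ) • !![4, 0, 3; 0, 5, 0; -3, 0, 4]

/-- `ψ(w) = U_{w_n}⁻¹ ⋯ U_{w_1}⁻¹ U_{w_n} ⋯ U_{w_1} e₁`. -/
noncomputable def AWpsi (w : List Bool) : Fin 3 → ℚ :=
  (((w.reverse.map fun c => (AWU c)⁻¹).prod) * ((w.reverse.map AWU).prod)).mulVec
    (Pi.single 0 1)

/-!
Write `U_w = U_{w_1} ⋯ U_{w_n}`. The letter matrices are orthogonal, so `ψ(w) = U_wᵀ U_{rev w} e₁`
is a unit vector whose first coordinate is `⟨U_w e₁, U_{rev w} e₁⟩`. Since `5 U_c` has integer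
entries, `5ⁿ U_w e₁` is an integer vector of squared norm `25ⁿ`, so this coordinate is `S / 25ⁿ`
for an integer `S` with `|S| ≤ 25ⁿ`, and equality would force `5ⁿ U_w e₁ = ± 5ⁿ U_{rev w} e₁`.
Reduced mod 5 these integer vectors determine their first letter, and `5 U_c` is injective, so
that only happens for `w = rev w`. Hence `|S| ≤ 25ⁿ - 1`, and the squared first coordinate is at
most `(1 - 25⁻ⁿ)²`, leaving at least `25⁻ⁿ` for the other two.
-/

section

variable {n : Type*} [Fintype n]

theorem dotProduct_self_pos_of_ne_zero {R : Type*} [Ring R] [LinearOrder R]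
    [IsStrictOrderedRing R] {v : n → R} (hv : v ≠ 0) : 0 < v ⬝ᵥ v :=
  (Finset.sum_nonneg fun i _ => mul_self_nonneg (v i)).lt_of_ne
    (Ne.symm (dotProduct_self_eq_zero.not.2 hv))

theorem abs_dotProduct_lt_of_ne_of_ne_neg {R : Type*} [CommRing R] [LinearOrder R]
    [IsStrictOrderedRing R] {u v : n → R} {K : R} (hu : u ⬝ᵥ u = K) (hv : v ⬝ᵥ v = K)
    (hne : u ≠ v) (hne_neg : u ≠ -v) : |u ⬝ᵥ v| < K := by
  have hsub := dotProduct_self_pos_of_ne_zero (sub_ne_zero.2 hne)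
  have hadd := dotProduct_self_pos_of_ne_zero fun h => hne_neg (eq_neg_of_add_eq_zero_left h)
  simp only [sub_dotProduct, dotProduct_sub, add_dotProduct, dotProduct_add,
    dotProduct_comm v u, hu, hv] at hsub hadd
  exact abs_lt.2 ⟨by linarith, by linarith⟩

theorem inv_le_one_sub_div_sq {α : Type*} [Field α] [LinearOrder α] [IsStrictOrderedRing α]
    {S K : ℤ} (h : |S| < K) : (K : α)⁻¹ ≤ 1 - ((S : α) / K) ^ 2 := by
  have hS : (|S| : α) ≤ K - 1 := by exact_mod_cast Int.le_sub_one_of_lt h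
  have hK : (1 : α) ≤ K := by exact_mod_cast (abs_nonneg S).trans_lt h
  have hS2 : (S : α) ^ 2 ≤ (K - 1) ^ 2 := by
    rw [← sq_abs]; exact pow_le_pow_left₀ (abs_nonneg _) hS 2
  rw [div_pow, inv_eq_one_div, one_sub_div (by positivity), div_le_div_iff₀ (by positivity)
    (by positivity)]
  nlinarith

theorem list_prod_mul_transpose_eq_one {R : Type*} [CommRing R] [DecidableEq n]
    {l : List (Matrix n n R)} (h : ∀ A ∈ l, A * Aᵀ = 1) : l.prod * l.prodᵀ = 1 :=
  (mem_orthogonalGroup_iff n R).1 <|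
    Submonoid.list_prod_mem _ fun A hA => (mem_orthogonalGroup_iff n R).2 (h A hA)

end

def AWZ : Bool → Matrix (Fin 3) (Fin 3) ℤ
  | false => !![4, 3, 0; -3, 4, 0; 0, 0, 5]
  | true  => !![4, 0, 3; 0, 5, 0; -3, 0, 4]

theorem AWZ_transpose_mul_self (c : Bool) : (AWZ c)ᵀ * AWZ c = (25 : ℤ) • 1 := by
  cases c <;> decide

theorem AWZ_mulVec_injective (c : Bool) : Function.Injective (AWZ c *ᵥ ·) := by
  intro x y h
  have h25 := congrArg ((AWZ c)ᵀ *ᵥ ·) h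
  simp only [mulVec_mulVec, AWZ_transpose_mul_self, smul_mulVec, one_mulVec] at h25
  exact smul_right_injective _ (by norm_num) h25

theorem AWU_eq_smul_map (c : Bool) : AWU c = (5 : ℚ)⁻¹ • (AWZ c).map (Int.castRingHom ℚ) := by
  cases c <;> ext i j <;> fin_cases i <;> fin_cases j <;> simp [AWU, AWZ]

theorem AWU_mul_transpose_self (c : Bool) : AWU c * (AWU c)ᵀ = 1 := by
  rw [mul_eq_one_comm, AWU_eq_smul_map, transpose_smul, smul_mul_smul_comm, ← transpose_map,
    ← Matrix.map_mul, AWZ_transpose_mul_self]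
  ext i j
  simp only [map_apply, Matrix.smul_apply, one_apply, smul_eq_mul]
  split_ifs <;> norm_num

def AWvec (w : List Bool) : Fin 3 → ℤ := (w.map AWZ).prod *ᵥ Pi.single 0 1

theorem AWvec_cons (c : Bool) (w : List Bool) : AWvec (c :: w) = AWZ c *ᵥ AWvec w := by
  rw [AWvec, AWvec, List.map_cons, List.prod_cons, mulVec_mulVec]

theorem AWvec_dotProduct_self (w : List Bool) : AWvec w ⬝ᵥ AWvec w = 25 ^ w.length := by
  induction w with
  | nil => decide
  | cons c w ih =>
    rw [AWvec_cons, dotProduct_mulVec, ← mulVec_transpose, mulVec_mulVec, AWZ_transpose_mul_self,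
      smul_mulVec, one_mulVec, smul_dotProduct, ih, List.length_cons, pow_succ, smul_eq_mul,
      mul_comm]

theorem list_prod_map_AWU_mulVec (w : List Bool) :
    (w.map AWU).prod *ᵥ Pi.single 0 1 = (5 ^ w.length : ℚ)⁻¹ • ((↑) ∘ AWvec w) := by
  induction w with
  | nil => ext i; fin_cases i <;> simp [AWvec]
  | cons c w ih =>
    have hmap : (AWZ c).map (Int.castRingHom ℚ) *ᵥ ((↑) ∘ AWvec w) = (↑) ∘ AWvec (c :: w) := by
      ext i; rw [AWvec_cons]; exact ((Int.castRingHom ℚ).map_mulVec _ _ i).symm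
    rw [List.map_cons, List.prod_cons, ← mulVec_mulVec, ih, AWU_eq_smul_map, mulVec_smul,
      smul_mulVec, hmap, smul_smul, List.length_cons, pow_succ, mul_inv]

-- Modulo 5, `AWvec (c :: w)` remembers its first letter `c`; the induction needs the first
-- coordinate to stay a unit mod 5.
theorem AWvec_cons_mod_five (c : Bool) (w : List Bool) :
    ¬ 5 ∣ AWvec (c :: w) 0 ∧
      if c then 5 ∣ AWvec (c :: w) 1 ∧ 5 ∣ AWvec (c :: w) 2 - 3 * AWvec (c :: w) 0
      else 5 ∣ AWvec (c :: w) 2 ∧ 5 ∣ AWvec (c :: w) 1 - 3 * AWvec (c :: w) 0 := by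
  induction w generalizing c with
  | nil => cases c <;> decide
  | cons c' w ih =>
    have h := ih c'
    rw [AWvec_cons c]
    generalize AWvec (c' :: w) = x at h ⊢
    cases c <;> cases c' <;>
      simp only [AWZ, mulVec, dotProduct, Fin.sum_univ_three, of_apply, cons_val', cons_val_zero,
        cons_val_one, cons_val, cons_val_fin_one, Bool.false_eq_true, ↓reduceIte] at h ⊢ <;>
      omega

theorem eq_of_AWvec_cons_eq_or_eq_neg {c c' : Bool} {w w' : List Bool}
    (h : AWvec (c :: w) = AWvec (c' :: w') ∨ AWvec (c :: w) = -AWvec (c' :: w')) : c = c' := by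
  have hc := AWvec_cons_mod_five c w
  have hc' := AWvec_cons_mod_five c' w'
  have h0 := h.imp (congrFun · 0) (congrFun · 0)
  have h1 := h.imp (congrFun · 1) (congrFun · 1)
  have h2 := h.imp (congrFun · 2) (congrFun · 2)
  simp only [Pi.neg_apply] at h0 h1 h2
  cases c <;> cases c' <;> simp only [Bool.false_eq_true, ↓reduceIte] at hc hc' ⊢ <;> omega

theorem eq_of_AWvec_eq_or_eq_neg {w w' : List Bool} (hlen : w.length = w'.length)
    (h : AWvec w = AWvec w' ∨ AWvec w = -AWvec w') : w = w' := by
  induction w generalizing w' with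
  | nil => exact (List.length_eq_zero_iff.1 hlen.symm).symm
  | cons c w ih =>
    obtain _ | ⟨c', w'⟩ := w'
    · simp at hlen
    obtain rfl := eq_of_AWvec_cons_eq_or_eq_neg h
    rw [AWvec_cons, AWvec_cons, ← mulVec_neg] at h
    rw [ih (Nat.succ.inj hlen) (h.imp (AWZ_mulVec_injective c ·) (AWZ_mulVec_injective c ·))]

theorem list_prod_map_AWU_mulVec_dotProduct {w w' : List Bool} (hlen : w.length = w'.length) :
    ((w.map AWU).prod *ᵥ Pi.single 0 1) ⬝ᵥ ((w'.map AWU).prod *ᵥ Pi.single 0 1) =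
      (AWvec w ⬝ᵥ AWvec w' : ℤ) / 25 ^ w.length := by
  have hcast : ((AWvec w ⬝ᵥ AWvec w' : ℤ) : ℚ) = ((↑) ∘ AWvec w) ⬝ᵥ ((↑) ∘ AWvec w') := by
    simp [dotProduct]
  rw [list_prod_map_AWU_mulVec, list_prod_map_AWU_mulVec, smul_dotProduct, dotProduct_smul,
    ← hlen, ← hcast, smul_eq_mul, smul_eq_mul, ← mul_assoc, ← mul_inv, ← mul_pow, div_eq_inv_mul]
  norm_num

theorem AWpsi_eq (w : List Bool) :
    AWpsi w = ((w.map AWU).prod)ᵀ *ᵥ ((w.reverse.map AWU).prod *ᵥ Pi.single 0 1) := by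
  have hinv : (w.reverse.map fun c => (AWU c)⁻¹).prod = ((w.map AWU).prod)ᵀ := by
    simp [transpose_list_prod, inv_eq_right_inv (AWU_mul_transpose_self _), List.map_reverse,
      Function.comp_def]
  rw [AWpsi, hinv, mulVec_mulVec]

theorem AWpsi_zero (w : List Bool) :
    AWpsi w 0 = (AWvec w ⬝ᵥ AWvec w.reverse : ℤ) / 25 ^ w.length := by
  rw [← list_prod_map_AWU_mulVec_dotProduct w.length_reverse.symm, AWpsi_eq, mulVec_transpose,
    dotProduct_comm, mulVec_single_one (List.map AWU w).prod]
  rfl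

theorem AWpsi_dotProduct_self (w : List Bool) : AWpsi w ⬝ᵥ AWpsi w = 1 := by
  have hC := list_prod_mul_transpose_eq_one (l := w.map AWU)
    (List.forall_mem_map.2 fun c _ => AWU_mul_transpose_self c)
  rw [AWpsi_eq, dotProduct_mulVec, vecMul_transpose, mulVec_mulVec, hC, one_mulVec,
    list_prod_map_AWU_mulVec_dotProduct rfl, AWvec_dotProduct_self, w.length_reverse]
  push_cast
  exact div_self (by positivity)

theorem AW_nonpalindrome_detected (w : List Bool) (hpal : w.reverse ≠ w) :
    AWpsi w ≠ Pi.single 0 1 ∧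
    (AWpsi w 1) ^ 2 + (AWpsi w 2) ^ 2 ≥ 1 / 25 ^ w.length := by
  have hS : |AWvec w ⬝ᵥ AWvec w.reverse| < 25 ^ w.length :=
    abs_dotProduct_lt_of_ne_of_ne_neg (AWvec_dotProduct_self w)
      (by rw [AWvec_dotProduct_self, w.length_reverse])
      (fun h => hpal (eq_of_AWvec_eq_or_eq_neg w.length_reverse.symm (.inl h)).symm)
      (fun h => hpal (eq_of_AWvec_eq_or_eq_neg w.length_reverse.symm (.inr h)).symm)
  have hpsi0 := AWpsi_zero w
  refine ⟨fun h => ?_, ?_⟩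
  · rw [h, Pi.single_eq_same, eq_div_iff (by positivity), one_mul] at hpsi0
    exact (abs_lt.1 hS).2.ne' (by exact_mod_cast hpsi0)
  · have hnorm := AWpsi_dotProduct_self w
    have hbound := inv_le_one_sub_div_sq (α := ℚ) hS
    rw [dotProduct, Fin.sum_univ_three, hpsi0] at hnorm
    push_cast at hbound
    rw [ge_iff_le, one_div]
    linarith
end

section
/- For every m×m row-stochastic matrix A over the reals, there exists a positive integer d ≤ lcm of some positive integers d₁,…,d_k with d₁ + ⋯ + d_k ≤ m, such that the limit lim_{i→∞} (A^d)^i exists (entrywise). -/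
/-!
The cluster points of the powers `Aⁿ` form a compact commutative semigroup, which contains an
idempotent `E` (Ellis–Numakura); `E` commutes with `A`, and `Aⁿ (1 - E) → 0`. The element `T = A E`
is invertible in the corner `E Mₘ(ℝ) E`, so `x ↦ x T` is an affine bijection of the set of
stationary distributions of `E`, the convex hull of the rows of `E`. It therefore permutes the at
most `m` extreme points of that set. If `d` is the order of this permutation, then `d` is at most
the lcm of a partition of the number of extreme points, `T ^ d` fixes every stationary distribution,
so `T ^ d = E`, and `A ^ (d i) = A ^ (d i) (1 - E) + E → E`.
-/

open Filter Set Topology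

section PowClusterPts

variable {M : Type*} [Monoid M] [TopologicalSpace M]

def powClusterPts (a : M) : Set M := {x | MapClusterPt x atTop (a ^ ·)}

variable {a : M} {K : Set M}

theorem isClosed_powClusterPts : IsClosed (powClusterPts a) := isClosed_setOfPred_clusterPt

theorem powClusterPts_subset_closure_range : powClusterPts a ⊆ closure (range (a ^ ·)) :=
  fun _ hx ↦ closure_mono (image_subset_range _ _)
    (mapClusterPt_atTop_iff_forall_mem_closure.1 hx 0)

theorem powClusterPts_subset (hK : IsClosed K) (hpow : ∀ n, a ^ n ∈ K) :
    powClusterPts a ⊆ K :=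
  powClusterPts_subset_closure_range.trans (closure_minimal (range_subset_iff.2 hpow) hK)

theorem powClusterPts_nonempty (hK : IsCompact K) (hpow : ∀ n, a ^ n ∈ K) :
    (powClusterPts a).Nonempty :=
  let ⟨x, _, hx⟩ := hK.exists_mapClusterPt (f := atTop) (u := (a ^ ·))
    (le_principal_iff.2 (Eventually.of_forall (p := fun n ↦ a ^ n ∈ K) hpow))
  ⟨x, hx⟩

variable [ContinuousMul M]

theorem mul_mem_powClusterPts {x y : M} (hx : x ∈ powClusterPts a) (hy : y ∈ powClusterPts a) :
    x * y ∈ powClusterPts a := by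
  simp only [powClusterPts, mem_ofPred, mapClusterPt_iff_frequently] at *
  intro W hW
  obtain ⟨U, hU, V, hV, hUV⟩ := mem_nhds_prod_iff.1 (continuous_mul.tendsto (x, y) hW)
  obtain ⟨b, hb⟩ := (hy V hV).exists
  refine frequently_atTop.2 fun N ↦ ?_
  obtain ⟨n, hn, hnU⟩ := frequently_atTop.1 (hx U hU) N
  exact ⟨n + b, le_add_right hn, pow_add a n b ▸ hUV (mk_mem_prod hnU hb)⟩

theorem exists_isIdempotentElem_mem_powClusterPts [T2Space M] (hK : IsCompact K)
    (hpow : ∀ n, a ^ n ∈ K) : ∃ e ∈ powClusterPts a, IsIdempotentElem e := by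
  let Ω : Subsemigroup M := ⟨powClusterPts a, mul_mem_powClusterPts⟩
  have : CompactSpace Ω := isCompact_iff_compactSpace.1 <|
    hK.of_isClosed_subset isClosed_powClusterPts (powClusterPts_subset hK.isClosed hpow)
  have : Nonempty Ω := (powClusterPts_nonempty hK hpow).to_subtype
  obtain ⟨⟨e, he⟩, hee⟩ := exists_idempotent_of_compact_t2_of_continuous_mul_left (M := Ω)
    fun r ↦ (continuous_subtype_val.mul continuous_const).subtype_mk _
  exact ⟨e, he, congrArg Subtype.val hee⟩

theorem commute_of_mem_closure_range_pow [T2Space M] {x y : M}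
    (hx : x ∈ closure (range (a ^ ·))) (hy : y ∈ closure (range (a ^ ·))) : Commute x y := by
  have hpow : range (a ^ ·) ⊆ centralizer (range (a ^ ·)) := by
    rintro _ ⟨n, rfl⟩ _ ⟨k, rfl⟩
    exact (Commute.pow_pow_self a k n).eq
  have hcl : range (a ^ ·) ⊆ centralizer (closure (range (a ^ ·))) := fun z hz w hw ↦
    (closure_minimal hpow (isClosed_centralizer _) hw z hz).symm
  exact (closure_minimal hcl (isClosed_centralizer _) hx y hy).symm

theorem exists_mul_eq_of_mem_powClusterPts [T2Space M] (hK : IsCompact K)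
    (hpow : ∀ n, a ^ n ∈ K) {e : M} (he : e ∈ powClusterPts a) :
    ∃ s ∈ powClusterPts a, a * s = e := by
  -- Along an ultrafilter on which `a ^ (n + 1) → e`, compactness gives `a ^ n → s`.
  rw [powClusterPts, mem_ofPred, ← map_add_atTop_eq_nat 1, MapClusterPt, map_map,
    ← MapClusterPt, mapClusterPt_iff_ultrafilter] at he
  obtain ⟨U, hU, hUe⟩ := he
  obtain ⟨s, -, hs⟩ := hK.ultrafilter_le_nhds (U.map (a ^ ·))
    (le_principal_iff.2 (Eventually.of_forall (p := fun n ↦ a ^ n ∈ K) hpow))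
  have hs' : Tendsto (a ^ ·) U (𝓝 s) := hs
  refine ⟨s, mapClusterPt_iff_ultrafilter.2 ⟨U, hU, hs'⟩, tendsto_nhds_unique ?_ hUe⟩
  simpa only [Function.comp_def, ← pow_succ'] using hs'.const_mul a

theorem commute_of_mem_powClusterPts [T2Space M] {x : M} (hx : x ∈ powClusterPts a) :
    Commute a x :=
  commute_of_mem_closure_range_pow (subset_closure ⟨1, pow_one a⟩)
    (powClusterPts_subset_closure_range hx)

theorem exists_mul_eq_of_isIdempotentElem_mem_powClusterPts [T2Space M] (hK : IsCompact K)
    (hpow : ∀ n, a ^ n ∈ K) {e : M} (he : e ∈ powClusterPts a) (hidem : IsIdempotentElem e) :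
    ∃ s ∈ powClusterPts a, a * e * s = e ∧ s * (a * e) = e ∧ s * e = s := by
  obtain ⟨s, hs, has⟩ := exists_mul_eq_of_mem_powClusterPts hK hpow he
  have hse : Commute s e := commute_of_mem_closure_range_pow
    (powClusterPts_subset_closure_range hs) (powClusterPts_subset_closure_range he)
  have hsa : Commute s a := (commute_of_mem_powClusterPts hs).symm
  have hae : Commute a e := commute_of_mem_powClusterPts he
  refine ⟨s * e, mul_mem_powClusterPts hs he, ?_, ?_, by rw [mul_assoc, hidem.eq]⟩
  · rw [mul_assoc, ← mul_assoc e, ← hse.eq, mul_assoc s, hidem.eq, ← mul_assoc, has, hidem.eq]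
  · rw [mul_assoc, ← mul_assoc e, ← hae.eq, mul_assoc a, hidem.eq, ← mul_assoc, hsa.eq, has,
      hidem.eq]

end PowClusterPts

section NormedRing

variable {R : Type*} [NormedRing R] {a e : R} {K : Set R}

theorem tendsto_pow_mul_one_sub_of_mem_powClusterPts (hK : IsCompact K) (hpow : ∀ n, a ^ n ∈ K)
    (he : e ∈ powClusterPts a) (hidem : IsIdempotentElem e) :
    Tendsto (fun n ↦ a ^ n * (1 - e)) atTop (𝓝 0) := by
  obtain ⟨C, hC⟩ := hK.isBounded.exists_norm_le
  have hC0 : 0 ≤ C := (norm_nonneg _).trans (hC _ (hpow 0))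
  have h0 : MapClusterPt 0 atTop (fun n ↦ a ^ n * (1 - e)) := by
    simpa [Function.comp_def, hidem.mul_one_sub_self] using
      he.tendsto_comp ((continuous_mul_const (1 - e)).tendsto e)
  rw [NormedAddGroup.tendsto_nhds_zero]
  intro ε hε
  have hδ : 0 < ε / (C + 1) := by positivity
  obtain ⟨n₀, hn₀⟩ := (h0.frequently (Metric.ball_mem_nhds 0 hδ)).exists
  filter_upwards [eventually_ge_atTop n₀] with n hn
  calc ‖a ^ n * (1 - e)‖ = ‖a ^ (n - n₀) * (a ^ n₀ * (1 - e))‖ := by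
        rw [← mul_assoc, ← pow_add, Nat.sub_add_cancel hn]
    _ ≤ C * (ε / (C + 1)) := (norm_mul_le _ _).trans
        (mul_le_mul (hC _ (hpow _)) (mem_ball_zero_iff.1 hn₀).le (norm_nonneg _) hC0)
    _ < ε := by
        rw [mul_div_assoc', div_lt_iff₀ (by positivity)]
        nlinarith

theorem tendsto_pow_pow_of_mul_pow_eq (hK : IsCompact K) (hpow : ∀ n, a ^ n ∈ K)
    (he : e ∈ powClusterPts a) (hidem : IsIdempotentElem e) {d : ℕ} (hd : 0 < d)
    (hde : (a * e) ^ d = e) : Tendsto (fun i ↦ (a ^ d) ^ i) atTop (𝓝 e) := by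
  have hlim := ((tendsto_pow_mul_one_sub_of_mem_powClusterPts hK hpow he hidem).comp
    (tendsto_id.const_mul_atTop' hd)).add_const e
  rw [zero_add] at hlim
  refine hlim.congr' ?_
  filter_upwards [eventually_ne_atTop 0] with i hi
  have hcorner : a ^ (d * i) * e = e :=
    calc a ^ (d * i) * e = (a * e) ^ (d * i) := by
          rw [(commute_of_mem_powClusterPts he).mul_pow, hidem.pow_eq (by positivity)]
      _ = e := by rw [pow_mul, hde, hidem.pow_eq hi]
  show a ^ (d * i) * (1 - e) + e = (a ^ d) ^ i
  rw [mul_sub, mul_one, hcorner, sub_add_cancel, pow_mul]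

end NormedRing

theorem Set.InvOn.mapsTo_extremePoints {𝕜 E F : Type*} [Semiring 𝕜] [PartialOrder 𝕜]
    [AddCommMonoid E] [Module 𝕜 E] [AddCommMonoid F] [Module 𝕜 F] {s : Set E} {t : Set F}
    {f : E →ₗ[𝕜] F} {g : F →ₗ[𝕜] E} (hinv : InvOn g f s t) (hf : MapsTo f s t)
    (hg : MapsTo g t s) : MapsTo f (s.extremePoints 𝕜) (t.extremePoints 𝕜) := by
  intro x hx
  rw [mem_extremePoints] at hx ⊢
  refine ⟨hf hx.1, fun y₁ hy₁ y₂ hy₂ ⟨a, b, ha, hb, hab, hxy⟩ ↦ ?_⟩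
  have hseg : x ∈ openSegment 𝕜 (g y₁) (g y₂) :=
    ⟨a, b, ha, hb, hab, by rw [← map_smul, ← map_smul, ← map_add, hxy, hinv.1 hx.1]⟩
  obtain ⟨h₁, h₂⟩ := hx.2 _ (hg hy₁) _ (hg hy₂) hseg
  exact ⟨by rw [← h₁, hinv.2 hy₁], by rw [← h₂, hinv.2 hy₂]⟩

theorem Set.EqOn.of_extremePoints {E : Type*} [AddCommGroup E] [Module ℝ E] [TopologicalSpace E]
    [T2Space E] [IsTopologicalAddGroup E] [ContinuousSMul ℝ E] [LocallyConvexSpace ℝ E]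
    {s : Set E} (hs : IsCompact s) (hconv : Convex ℝ s) {f : E →ₗ[ℝ] E} (hf : Continuous f)
    (h : EqOn f id (s.extremePoints ℝ)) : EqOn f id s := by
  rw [← closure_convexHull_extremePoints hs hconv]
  refine closure_minimal (convexHull_min h ?_) (isClosed_eq hf continuous_id)
  exact (LinearMap.eqLocus f LinearMap.id).convex

/-- For `0 < m` this says `d ≤ g(m)`, where `g` is Landau's function: the largest order of a
permutation of `m` points, i.e. the largest lcm of a partition of `m`. -/
def LeLandau (m d : ℕ) : Prop :=
  ∃ (k : ℕ) (ds : Fin k → ℕ), 0 < k ∧ (∀ i, 0 < ds i) ∧ (∑ i, ds i) ≤ m ∧ d ≤ Finset.univ.lcm ds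

theorem LeLandau.mono {m m' d : ℕ} (h : LeLandau m d) (hm : m ≤ m') : LeLandau m' d :=
  let ⟨k, ds, hk, hpos, hsum, hd⟩ := h
  ⟨k, ds, hk, hpos, hsum.trans hm, hd⟩

theorem leLandau_of_dvd_lcm {m d : ℕ} {s : Multiset ℕ} (hs : s ≠ 0) (hpos : ∀ a ∈ s, 0 < a)
    (hsum : s.sum ≤ m) (hd : d ∣ s.lcm) : LeLandau m d := by
  have hmap : Finset.univ.val.map s.toList.get = s := by
    rw [Fin.univ_val_map, List.ofFn_get, Multiset.coe_toList]
  refine ⟨s.toList.length, s.toList.get, by simpa using Multiset.card_pos.2 hs,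
    fun i ↦ hpos _ (Multiset.mem_toList.1 (List.get_mem _ _)), ?_, ?_⟩
  · rwa [Finset.sum_eq_multiset_sum, hmap]
  · rw [Finset.lcm_def, hmap]
    refine Nat.le_of_dvd (Nat.pos_of_ne_zero fun h0 ↦ ?_) hd
    exact (hpos 0 ((Multiset.lcm_eq_zero_iff s).1 h0)).ne rfl

theorem Equiv.Perm.leLandau_orderOf {α : Type*} [Fintype α] [DecidableEq α] [Nonempty α]
    (σ : Perm α) : LeLandau (Fintype.card α) (orderOf σ) := by
  refine leLandau_of_dvd_lcm (s := σ.partition.parts) (fun h ↦ ?_) (fun _ ↦ σ.partition.parts_pos)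
    σ.partition.parts_sum.le ?_
  · exact Fintype.card_ne_zero (σ.partition.parts_sum.symm.trans (by rw [h, Multiset.sum_zero]))
  · rw [← σ.lcm_cycleType, Equiv.Perm.parts_partition]
    exact Multiset.lcm_mono (Multiset.subset_of_le (Multiset.le_add_right _ _))

theorem Set.BijOn.exists_leLandau_iterate_eq {α : Type*} {s : Set α} {f : α → α}
    (hf : BijOn f s s) (hs : s.Finite) (hne : s.Nonempty) :
    ∃ d, 0 < d ∧ LeLandau s.ncard d ∧ EqOn f^[d] id s := by
  classical
  have := hs.fintype
  have := hne.to_subtype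
  let σ : Equiv.Perm s := hf.equiv f
  refine ⟨orderOf σ, orderOf_pos σ, ?_, fun x hx ↦ ?_⟩
  · rw [← Nat.card_coe_set_eq, Nat.card_eq_fintype_card]
    exact σ.leLandau_orderOf
  · have h : (σ ^ orderOf σ) ⟨x, hx⟩ = ⟨x, hx⟩ := by rw [pow_orderOf_eq_one]; rfl
    rw [Equiv.Perm.coe_pow] at h
    exact (hf.mapsTo.coe_iterate_restrict ⟨x, hx⟩ _).symm.trans (congrArg Subtype.val h)

namespace Matrix

variable {n : Type*} [Fintype n] [DecidableEq n]

theorem isCompact_rowStochastic : IsCompact (rowStochastic ℝ n : Set (Matrix n n ℝ)) := by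
  have hclosed : IsClosed (rowStochastic ℝ n : Set (Matrix n n ℝ)) := by
    have : (rowStochastic ℝ n : Set (Matrix n n ℝ)) =
        (⋂ i, ⋂ j, {M | 0 ≤ M i j}) ∩ {M | M *ᵥ 1 = 1} := by
      ext; simp [mem_rowStochastic]
    rw [this]
    exact (isClosed_iInter fun i ↦ isClosed_iInter fun j ↦ isClosed_le continuous_const
      (continuous_apply_apply i j)).inter
      (isClosed_eq (continuous_id.matrix_mulVec continuous_const) continuous_const)
  refine (isCompact_univ_pi fun _ ↦ isCompact_univ_pi fun _ ↦
    isCompact_Icc (a := (0 : ℝ)) (b := 1)).of_isClosed_subset hclosed fun M hM i _ j _ ↦ ?_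
  exact ⟨nonneg_of_mem_rowStochastic hM, le_one_of_mem_rowStochastic hM⟩

theorem vecMul_mem_stdSimplex {M : Matrix n n ℝ} (hM : M ∈ rowStochastic ℝ n) {x : n → ℝ}
    (hx : x ∈ stdSimplex ℝ n) : x ᵥ* M ∈ stdSimplex ℝ n := by
  refine ⟨nonneg_vecMul_of_mem_rowStochastic hM hx.1, ?_⟩
  have := vecMul_dotProduct_one_eq_one_rowStochastic hM (by simpa [dotProduct] using hx.2)
  simpa [dotProduct] using this

def stationaryDistributions (E : Matrix n n ℝ) : Set (n → ℝ) :=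
  {x | x ∈ stdSimplex ℝ n ∧ x ᵥ* E = x}

variable {E M : Matrix n n ℝ}

theorem mapsTo_vecMul_stationaryDistributions (hM : M ∈ rowStochastic ℝ n) (hME : M * E = M) :
    MapsTo (· ᵥ* M) (stationaryDistributions E) (stationaryDistributions E) :=
  fun _ hx ↦ ⟨vecMul_mem_stdSimplex hM hx.1, by rw [vecMul_vecMul, hME]⟩

theorem stationaryDistributions_eq_convexHull (hE : E ∈ rowStochastic ℝ n)
    (hidem : IsIdempotentElem E) : stationaryDistributions E = convexHull ℝ (range E) := by
  refine Subset.antisymm (fun x ⟨hx, hxE⟩ ↦ ?_) (convexHull_min ?_ ?_)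
  · rw [← hxE, vecMul_eq_sum]
    exact (convex_convexHull ℝ _).sum_mem (fun i _ ↦ hx.1 i) hx.2
      fun i _ ↦ subset_convexHull ℝ _ (mem_range_self i)
  · rintro _ ⟨i, rfl⟩
    exact ⟨(mem_rowStochastic_iff_sum.1 hE).imp (· i) (· i),
      by rw [← mul_apply_eq_vecMul, hidem.eq]⟩
  · exact (convex_stdSimplex ℝ n).inter (LinearMap.eqLocus (vecMulLinear E) LinearMap.id).convex

theorem vecMul_iterate (T : Matrix n n ℝ) (k : ℕ) (x : n → ℝ) :
    (· ᵥ* T)^[k] x = x ᵥ* T ^ k := by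
  induction k with
  | zero => simp
  | succ k ih => rw [Function.iterate_succ_apply', ih, vecMul_vecMul, pow_succ]

theorem exists_leLandau_pow_eq_of_mul_eq [Nonempty n] {E T S : Matrix n n ℝ}
    (hE : E ∈ rowStochastic ℝ n) (hT : T ∈ rowStochastic ℝ n) (hS : S ∈ rowStochastic ℝ n)
    (hidem : IsIdempotentElem E) (hTE : T * E = T) (hET : E * T = T) (hSE : S * E = S)
    (hTS : T * S = E) (hST : S * T = E) :
    ∃ d, 0 < d ∧ LeLandau (Fintype.card n) d ∧ T ^ d = E := by
  set V := stationaryDistributions E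
  have hV : V = convexHull ℝ (range E) := stationaryDistributions_eq_convexHull hE hidem
  have hVc : IsCompact V := hV ▸ (finite_range E).isCompact_convexHull (𝕜 := ℝ)
  have hext : V.extremePoints ℝ ⊆ range E := by
    rw [hV]; exact extremePoints_convexHull_subset
  have hinv : InvOn (vecMulLinear S) (vecMulLinear T) V V :=
    ⟨fun x hx ↦ by simp [vecMul_vecMul, hTS, hx.2],
      fun x hx ↦ by simp [vecMul_vecMul, hST, hx.2]⟩
  have hmapsT := mapsTo_vecMul_stationaryDistributions hT hTE
  have hmapsS := mapsTo_vecMul_stationaryDistributions hS hSE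
  have hbij : BijOn (· ᵥ* T) (V.extremePoints ℝ) (V.extremePoints ℝ) :=
    (hinv.mono extremePoints_subset extremePoints_subset).bijOn
      (hinv.mapsTo_extremePoints hmapsT hmapsS) (hinv.symm.mapsTo_extremePoints hmapsS hmapsT)
  have hne : (V.extremePoints ℝ).Nonempty := hVc.extremePoints_nonempty
    ⟨E (Classical.arbitrary n), hV ▸ subset_convexHull ℝ _ (mem_range_self _)⟩
  obtain ⟨d, hd, hLandau, hfix⟩ :=
    hbij.exists_leLandau_iterate_eq ((finite_range E).subset hext) hne
  have hcard : (V.extremePoints ℝ).ncard ≤ Fintype.card n := by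
    rw [← Nat.card_eq_fintype_card]
    exact (ncard_le_ncard hext (finite_range E)).trans
      ((Nat.card_coe_set_eq _).symm.trans_le (Finite.card_range_le E))
  refine ⟨d, hd, hLandau.mono hcard, ?_⟩
  have hfixV : EqOn (vecMulLinear (T ^ d)) id V :=
    EqOn.of_extremePoints hVc (hV ▸ convex_convexHull ℝ _)
      (LinearMap.continuous_of_finiteDimensional _)
      fun x hx ↦ by simpa [vecMul_iterate] using hfix hx
  have hETd : E * T ^ d = T ^ d := by
    obtain ⟨k, rfl⟩ := Nat.exists_eq_add_one_of_ne_zero hd.ne'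
    rw [pow_succ', ← mul_assoc, hET]
  funext i
  rw [← hETd, mul_apply_eq_vecMul]
  exact hfixV (hV ▸ subset_convexHull ℝ _ (mem_range_self i))

end Matrix

theorem stochastic_matrix_power_limit (m : ℕ) (hm : 0 < m)
    (A : Matrix (Fin m) (Fin m) ℝ)
    (hnonneg : ∀ i j, 0 ≤ A i j) (hrow : ∀ i, ∑ j, A i j = 1) :
    ∃ (d : ℕ), 0 < d ∧
      (∃ (k : ℕ) (ds : Fin k → ℕ), 0 < k ∧ (∀ i, 0 < ds i) ∧
        (∑ i, ds i) ≤ m ∧ d ≤ Finset.univ.lcm ds) ∧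
      ∃ L : Matrix (Fin m) (Fin m) ℝ,
        Tendsto (fun i : ℕ => (A ^ d) ^ i) atTop (nhds L) := by
  -- any submultiplicative norm inducing the entrywise topology would do
  let := Matrix.linftyOpNormedRing (n := Fin m) (α := ℝ)
  have : Nonempty (Fin m) := ⟨⟨0, hm⟩⟩
  have hK := Matrix.isCompact_rowStochastic (n := Fin m)
  have hA : A ∈ Matrix.rowStochastic ℝ (Fin m) :=
    Matrix.mem_rowStochastic_iff_sum.2 ⟨hnonneg, hrow⟩
  have hpow (n : ℕ) : A ^ n ∈ Matrix.rowStochastic ℝ (Fin m) := pow_mem hA n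
  obtain ⟨E, hEω, hidem⟩ := exists_isIdempotentElem_mem_powClusterPts hK hpow
  obtain ⟨S, hSω, hTS, hST, hSE⟩ :=
    exists_mul_eq_of_isIdempotentElem_mem_powClusterPts hK hpow hEω hidem
  have hE := powClusterPts_subset hK.isClosed hpow hEω
  have hAE := commute_of_mem_powClusterPts hEω
  obtain ⟨d, hd, hLandau, hdE⟩ := Matrix.exists_leLandau_pow_eq_of_mul_eq hE (mul_mem hA hE)
    (powClusterPts_subset hK.isClosed hpow hSω) hidem (by rw [mul_assoc, hidem.eq])
    (by rw [← mul_assoc, ← hAE.eq, mul_assoc, hidem.eq]) hSE hTS hST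
  rw [Fintype.card_fin] at hLandau
  exact ⟨d, hd, hLandau, E, tendsto_pow_pow_of_mul_pow_eq hK hpow hEω hidem hd hdE⟩
end

section
/- Let d, k be positive integers with gcd(d, 2^{k+1}) = gcd(d, 2^k) = 2^l, and let t = d / 2^l. Then the map sending an odd positive integer i to (i · 2^k) mod d, as i ranges over odd positive integers, takes exactly the same set of values as the map i ↦ (i · 2^k) mod d as i ranges over all positive integers. -/
theorem odd_multiples_cover_residues (d k l : ℕ) (hd : 0 < d) (hk : 0 < k) (hl : 0 < l)
    (h1 : Nat.gcd d (2 ^ k) = 2 ^ l) (h2 : Nat.gcd d (2 ^ (k + 1)) = 2 ^ l) :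
    {x : ℕ | ∃ i : ℕ, 0 < i ∧ Odd i ∧ (i * 2 ^ k) % d = x} =
    {x : ℕ | ∃ i : ℕ, 0 < i ∧ (i * 2 ^ k) % d = x} := by
  ext x
  simp only [Set.mem_setOf_eq]
  constructor
  · rintro ⟨i, hi, _, hx⟩; exact ⟨i, hi, hx⟩
  · rintro ⟨i, hi, hx⟩
    have hld : 2 ^ l ∣ d := h1 ▸ Nat.gcd_dvd_left _ _
    have hlk : l ≤ k := by
      have : (2:ℕ) ^ l ∣ 2 ^ k := h1 ▸ Nat.gcd_dvd_right _ _
      exact (Nat.pow_dvd_pow_iff_le_right one_lt_two).mp this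
    set t := d / 2 ^ l with ht
    have htd : t * 2 ^ l = d := Nat.div_mul_cancel hld
    have htodd : Odd t := by
      rcases Nat.even_or_odd t with he | ho
      · exfalso
        obtain ⟨m, hm⟩ := he
        have hdd : 2 ^ (l + 1) ∣ d := ⟨m, by rw [← htd, hm]; ring⟩
        have h2d : 2 ^ (l + 1) ∣ Nat.gcd d (2 ^ (k + 1)) :=
          Nat.dvd_gcd hdd (pow_dvd_pow 2 (by omega))
        rw [h2] at h2d
        have := (Nat.pow_dvd_pow_iff_le_right one_lt_two).mp h2d
        omega
      · exact ho
    rcases Nat.even_or_odd i with he | ho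
    · have hkey : t * 2 ^ k = d * 2 ^ (k - l) := by
        rw [← htd, mul_assoc, ← pow_add]
        congr 2
        omega
      refine ⟨i + t, by positivity, he.add_odd htodd, ?_⟩
      rw [add_mul, hkey, Nat.add_mul_mod_self_left, hx]
    · exact ⟨i, hi, ho, hx⟩
end

section
/- Define PromiseEQ_yes = { a^m b a^m b a^n : m ≠ n } and PromiseEQ_no = { a^m b a^n b a^m : m ≠ n } over alphabet {a,b}. For each positive integer m, the set W = { a^i : 1 ≤ i ≤ m } consists of pairwise (3m+1)-dissimilar strings: for any i ≠ j in [1,m], the string u = b a^i b a^j satisfies a^i u ∈ PromiseEQ_yes and a^j u ∈ PromiseEQ_no, with |a^i u|, |a^j u| ≤ 3m+1. -/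
inductive AB : Type
  | a : AB
  | b : AB
  deriving DecidableEq

open AB

def PromiseEQyes : Set (List AB) :=
  {w | ∃ m n : ℕ, m ≠ n ∧
    w = List.replicate m a ++ [b] ++ List.replicate m a ++ [b] ++ List.replicate n a}

def PromiseEQno : Set (List AB) :=
  {w | ∃ m n : ℕ, m ≠ n ∧
    w = List.replicate m a ++ [b] ++ List.replicate n a ++ [b] ++ List.replicate m a}

theorem promiseEQ_dissimilar (m : ℕ) (hm : 0 < m) (i j : ℕ)
    (hi1 : 1 ≤ i) (hi2 : i ≤ m) (hj1 : 1 ≤ j) (hj2 : j ≤ m) (hij : i ≠ j) :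
    let u : List AB := [b] ++ List.replicate i a ++ [b] ++ List.replicate j a
    (List.replicate i a ++ u) ∈ PromiseEQyes ∧
    (List.replicate j a ++ u) ∈ PromiseEQno ∧
    (List.replicate i a ++ u).length ≤ 3 * m + 1 ∧
    (List.replicate j a ++ u).length ≤ 3 * m + 1 := by
  intro u
  refine ⟨⟨i, j, hij, by simp [u]⟩, ⟨j, i, hij.symm, by simp [u]⟩, ?_, ?_⟩ <;>
    simp [u] <;> omega
end

section
/- For every positive integer m and distinct strings u, u' ∈ {a,b}^m, there exist strings y, z with y·(u c u)·z ∈ PromisePAL_yes and y·(u' c u')·z ∈ PromisePAL_no, namely y = reverse(u) and z = reverse(u'). In particular the set { u c u : u ∈ {a,b}^m } has 2^m pairwise dissimilar elements for PromisePAL. -/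
inductive ABC : Type
  | a : ABC
  | b : ABC
  | c : ABC
  deriving DecidableEq

open ABC

/-- `w` is a word over the subalphabet `{a,b}`. -/
def NoC (w : List ABC) : Prop := ∀ x ∈ w, x ≠ c

def IsPal (w : List ABC) : Prop := w.reverse = w

def PromisePALyes : Set (List ABC) :=
  {w | ∃ u v : List ABC, NoC u ∧ NoC v ∧ u.length = v.length ∧
    IsPal u ∧ ¬ IsPal v ∧ w = u ++ [c] ++ v}

def PromisePALno : Set (List ABC) :=
  {w | ∃ u v : List ABC, NoC u ∧ NoC v ∧ u.length = v.length ∧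
    ¬ IsPal u ∧ IsPal v ∧ w = u ++ [c] ++ v}

lemma noC_append {p q : List ABC} (hp : NoC p) (hq : NoC q) : NoC (p ++ q) := by
  intro x hx
  rcases List.mem_append.mp hx with h | h
  · exact hp x h
  · exact hq x h

lemma noC_reverse {p : List ABC} (hp : NoC p) : NoC p.reverse := by
  intro x hx; exact hp x (List.mem_reverse.mp hx)

lemma not_pal_mix {p q : List ABC} (hlen : p.length = q.length) (hne : p ≠ q) :
    ¬ IsPal (p ++ q.reverse) := by
  intro h
  unfold IsPal at h
  rw [List.reverse_append, List.reverse_reverse] at h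
  have := List.append_inj_left h (by simp [hlen])
  exact hne this.symm

theorem promisePAL_dissimilar (m : ℕ) (hm : 0 < m) (u u' : List ABC)
    (hu : NoC u) (hu' : NoC u') (hlen : u.length = m) (hlen' : u'.length = m)
    (hne : u ≠ u') :
    ∃ y z : List ABC, y = u.reverse ∧ z = u'.reverse ∧
      (y ++ (u ++ [c] ++ u) ++ z) ∈ PromisePALyes ∧
      (y ++ (u' ++ [c] ++ u') ++ z) ∈ PromisePALno := by
  refine ⟨u.reverse, u'.reverse, rfl, rfl, ?_, ?_⟩
  · refine ⟨u.reverse ++ u, u ++ u'.reverse,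
      noC_append (noC_reverse hu) hu, noC_append hu (noC_reverse hu'),
      by simp [hlen, hlen'], ?_, ?_, by simp⟩
    · unfold IsPal; simp
    · exact not_pal_mix (hlen.trans hlen'.symm) hne
  · refine ⟨u.reverse ++ u', u' ++ u'.reverse,
      noC_append (noC_reverse hu) hu', noC_append hu' (noC_reverse hu'),
      by simp [hlen, hlen'], ?_, ?_, by simp⟩
    · intro h
      unfold IsPal at h
      rw [List.reverse_append, List.reverse_reverse] at h
      have := List.append_inj_left h (by simp [hlen, hlen'])
      have h2 : u' = u := by simpa using congrArg List.reverse this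
      exact hne h2.symm
    · unfold IsPal; simp
end
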